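/- arXiv:1201.1540 — 2 statements merged into one kernel-verified Lean document; each statement's English description precedes it below -/
import Mathlib

section
/- Let β > 0 be fixed. For each n let Λ_n > 0 and N_n a positive integer with Λ_n → ∞ and N_n/Λ_n → ∞ as n → ∞, and define Z_n^{(0)} = Σ_{0<k_1<...<k_{N_n}} exp(−β Σ_{i=1}^{N_n} π²k_i²/Λ_n²). Then (ln Z_n^{(0)})/N_n → −∞ as n → ∞. -/
/-!
Write `Z_N = ∑_{|s| = N} ∏_{k ∈ s} exp (-a k²)` with `a = β π² / Λ²`. Each `N`-set of modes gives
`N!` distinct ordered `N`-tuples, so `N! Z_N ≤ T ^ N` with `T = ∑_{k ≥ 1} exp (-a k²)`. Since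
`a k² ≥ 2 √a k - 1`, `T ≤ e ∑_{k ≥ 1} exp (-2 √a k) ≤ e / (2 √a) = e Λ / (2 π √β)`. Together with
`N! ≥ (N / e) ^ N` this gives `log Z_N / N ≤ 2 - log (2 π √β · N / Λ)`, which tends to `-∞` as soon
as the density `N / Λ` does.
-/

open Real Filter

/-- Free canonical partition function of `N` Fermi particles in `[0,Λ]` with Dirichlet
boundary conditions. -/
noncomputable def freeZ (β Λ : ℝ) (N : ℕ) : ℝ :=
  ∑' s : {s : Finset ℕ+ // s.card = N},
    Real.exp (-β * ∑ k ∈ s.1, π ^ 2 * (k : ℕ) ^ 2 / Λ ^ 2)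

open scoped ENNReal Nat

section ManyParticleSums

variable {α : Type*}

theorem ENNReal.tsum_pi_prod_eq_pow (f : α → ℝ≥0∞) (n : ℕ) :
    ∑' g : Fin n → α, ∏ i, f (g i) = (∑' a, f a) ^ n := by
  induction n with
  | zero => simp
  | succ n ih =>
    rw [← (Fin.consEquiv fun _ => α).tsum_eq, ENNReal.tsum_prod', pow_succ', ← ih,
      ← ENNReal.tsum_mul_right]
    refine tsum_congr fun a => ?_
    rw [← ENNReal.tsum_mul_left]
    refine tsum_congr fun g => ?_
    simp [Fin.consEquiv, Fin.prod_univ_succ]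

theorem ENNReal.factorial_mul_tsum_finset_prod_le [LinearOrder α] (f : α → ℝ≥0∞) (n : ℕ) :
    n ! * ∑' s : {s : Finset α // s.card = n}, ∏ k ∈ s.1, f k ≤ (∑' a, f a) ^ n := by
  let Φ : {s : Finset α // s.card = n} × Equiv.Perm (Fin n) → Fin n → α :=
    fun p => p.1.1.orderEmbOfFin p.1.2 ∘ p.2
  have hΦ_range (p) : Set.range (Φ p) = p.1.1 := by
    simp [Φ, Set.range_comp, Finset.range_orderEmbOfFin]
  have hΦ_inj : Function.Injective Φ := by
    rintro ⟨⟨s, hs⟩, σ⟩ ⟨⟨t, ht⟩, τ⟩ h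
    obtain rfl : s = t := by
      simpa using (hΦ_range _).symm.trans ((congrArg _ h).trans (hΦ_range _))
    obtain rfl : σ = τ := Equiv.ext fun i => (s.orderEmbOfFin hs).injective (congrFun h i)
    rfl
  have hΦ_prod (p) : ∏ i, f (Φ p i) = ∏ k ∈ p.1.1, f k := by
    rw [← Finset.prod_coe_sort p.1.1]
    exact (Equiv.prod_comp p.2 _).trans
      (Equiv.prod_comp (p.1.1.orderIsoOfFin p.1.2).toEquiv fun k : p.1.1 => f k)
  calc (n ! : ℝ≥0∞) * ∑' s : {s : Finset α // s.card = n}, ∏ k ∈ s.1, f k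
      = ∑' p, ∏ i, f (Φ p i) := by
        simp [hΦ_prod, ENNReal.tsum_prod', ENNReal.tsum_mul_right, mul_comm, Fintype.card_perm]
    _ ≤ ∑' g : Fin n → α, ∏ i, f (g i) := ENNReal.tsum_comp_le_tsum_of_injective hΦ_inj _
    _ = (∑' a, f a) ^ n := ENNReal.tsum_pi_prod_eq_pow f n

end ManyParticleSums

section RealSums

variable {α : Type*} [LinearOrder α] {f : α → ℝ}

theorem ENNReal.ofReal_tsum_finset_prod_le (hf0 : ∀ a, 0 ≤ f a) (hf : Summable f) (n : ℕ) :
    n ! * ∑' s : {s : Finset α // s.card = n}, ENNReal.ofReal (∏ k ∈ s.1, f k)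
      ≤ ENNReal.ofReal ((∑' a, f a) ^ n) := by
  rw [ENNReal.ofReal_pow (tsum_nonneg hf0), ENNReal.ofReal_tsum_of_nonneg hf0 hf]
  simpa only [ENNReal.ofReal_prod_of_nonneg fun k _ => hf0 k]
    using ENNReal.factorial_mul_tsum_finset_prod_le (fun a => ENNReal.ofReal (f a)) n

theorem summable_finset_prod (hf0 : ∀ a, 0 ≤ f a) (hf : Summable f) (n : ℕ) :
    Summable fun s : {s : Finset α // s.card = n} => ∏ k ∈ s.1, f k := by
  have hfin : ∑' s : {s : Finset α // s.card = n}, ENNReal.ofReal (∏ k ∈ s.1, f k) ≠ ⊤ :=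
    ((le_mul_of_one_le_left' (Nat.one_le_cast.mpr n.factorial_pos)).trans
      (ENNReal.ofReal_tsum_finset_prod_le hf0 hf n)).trans_lt ENNReal.ofReal_lt_top |>.ne
  simpa [ENNReal.toReal_ofReal, Finset.prod_nonneg fun k _ => hf0 k] using
    ENNReal.summable_toReal hfin

theorem factorial_mul_tsum_finset_prod_le (hf0 : ∀ a, 0 ≤ f a) (hf : Summable f) (n : ℕ) :
    n ! * ∑' s : {s : Finset α // s.card = n}, ∏ k ∈ s.1, f k ≤ (∑' a, f a) ^ n := by
  have hprod0 (s : {s : Finset α // s.card = n}) : 0 ≤ ∏ k ∈ s.1, f k :=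
    Finset.prod_nonneg fun k _ => hf0 k
  rw [← ENNReal.ofReal_le_ofReal_iff (pow_nonneg (tsum_nonneg hf0) n),
    ENNReal.ofReal_mul (Nat.cast_nonneg _), ENNReal.ofReal_natCast,
    ENNReal.ofReal_tsum_of_nonneg hprod0 (summable_finset_prod hf0 hf n)]
  exact ENNReal.ofReal_tsum_finset_prod_le hf0 hf n

theorem tsum_finset_prod_pos [Infinite α] (hf0 : ∀ a, 0 < f a) (hf : Summable f) (n : ℕ) :
    0 < ∑' s : {s : Finset α // s.card = n}, ∏ k ∈ s.1, f k := by
  obtain ⟨s, hs⟩ := Infinite.exists_subset_card_eq α n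
  exact (summable_finset_prod (fun a => (hf0 a).le) hf n).tsum_pos
    (fun s => Finset.prod_nonneg fun k _ => (hf0 k).le) ⟨s, hs⟩
    (Finset.prod_pos fun k _ => hf0 k)

end RealSums

theorem exp_neg_mul_sq_le {a : ℝ} (ha : 0 ≤ a) (x : ℝ) :
    exp (-(a * x ^ 2)) ≤ exp 1 * exp (-(2 * √a * x)) := by
  rw [← exp_add, exp_le_exp]
  nlinarith [sq_nonneg (√a * x - 1), sq_sqrt ha]

theorem exp_neg_mul_eq_pow (b : ℝ) (k : ℕ) : exp (-(b * k)) = exp (-b) ^ k := by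
  rw [← exp_nat_mul]
  ring_nf

theorem summable_pnat_exp_neg_mul {b : ℝ} (hb : 0 < b) :
    Summable fun k : ℕ+ => exp (-(b * k)) := by
  simp only [exp_neg_mul_eq_pow]
  exact (summable_geometric_of_lt_one (exp_nonneg _) (exp_lt_one_iff.mpr (by linarith)))
    |>.comp_injective PNat.coe_injective

theorem tsum_pnat_exp_neg_mul_le {b : ℝ} (hb : 0 < b) :
    ∑' k : ℕ+, exp (-(b * k)) ≤ 1 / b := by
  have hr : exp (-b) < 1 := exp_lt_one_iff.mpr (by linarith)
  calc ∑' k : ℕ+, exp (-(b * k)) = ∑' k : ℕ, exp (-b) ^ (k + 1) := by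
        simp only [exp_neg_mul_eq_pow]
        exact tsum_pnat_eq_tsum_succ (f := fun k => exp (-b) ^ k)
    _ = 1 / (exp b - 1) := by
        rw [funext fun k => pow_succ' (exp (-b)) k, tsum_mul_left,
          tsum_geometric_of_lt_one (exp_nonneg _) hr, exp_neg]
        field_simp
    _ ≤ 1 / b := one_div_le_one_div_of_le hb (by linarith [add_one_le_exp b])

theorem summable_pnat_exp_neg_mul_sq {a : ℝ} (ha : 0 < a) :
    Summable fun k : ℕ+ => exp (-(a * (k : ℝ) ^ 2)) :=
  .of_nonneg_of_le (fun _ => (exp_pos _).le) (fun k => exp_neg_mul_sq_le ha.le k)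
    ((summable_pnat_exp_neg_mul (by positivity)).mul_left _)

theorem tsum_pnat_exp_neg_mul_sq_le {a : ℝ} (ha : 0 < a) :
    ∑' k : ℕ+, exp (-(a * (k : ℝ) ^ 2)) ≤ exp 1 / (2 * √a) := by
  have hb : 0 < 2 * √a := by positivity
  calc ∑' k : ℕ+, exp (-(a * (k : ℝ) ^ 2)) ≤ ∑' k : ℕ+, exp 1 * exp (-(2 * √a * k)) :=
        (summable_pnat_exp_neg_mul_sq ha).tsum_le_tsum (fun k => exp_neg_mul_sq_le ha.le k)
          ((summable_pnat_exp_neg_mul hb).mul_left _)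
    _ ≤ exp 1 * (1 / (2 * √a)) := by
        rw [tsum_mul_left]
        exact mul_le_mul_of_nonneg_left (tsum_pnat_exp_neg_mul_le hb) (exp_pos 1).le
    _ = exp 1 / (2 * √a) := mul_one_div _ _

theorem freeZ_eq_tsum_prod (β Λ : ℝ) (N : ℕ) :
    freeZ β Λ N = ∑' s : {s : Finset ℕ+ // s.card = N},
      ∏ k ∈ s.1, exp (-(β * π ^ 2 / Λ ^ 2 * (k : ℝ) ^ 2)) := by
  refine tsum_congr fun s => ?_
  rw [← exp_sum, Finset.mul_sum]
  congr 1
  refine Finset.sum_congr rfl fun k _ => ?_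
  ring

section FreeZ

variable {β Λ : ℝ} (hβ : 0 < β) (hΛ : 0 < Λ)
include hβ hΛ

theorem freeZ_pos (N : ℕ) : 0 < freeZ β Λ N := by
  rw [freeZ_eq_tsum_prod]
  exact tsum_finset_prod_pos (fun _ => exp_pos _) (summable_pnat_exp_neg_mul_sq (by positivity)) N

theorem factorial_mul_freeZ_le (N : ℕ) :
    N ! * freeZ β Λ N ≤ (exp 1 / (2 * π * √β / Λ)) ^ N := by
  have ha : 0 < β * π ^ 2 / Λ ^ 2 := by positivity
  have hsqrt : √(β * π ^ 2 / Λ ^ 2) = π * √β / Λ := by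
    rw [sqrt_div' _ (sq_nonneg Λ), sqrt_mul hβ.le, sqrt_sq pi_pos.le, sqrt_sq hΛ.le, mul_comm]
  rw [freeZ_eq_tsum_prod]
  refine (factorial_mul_tsum_finset_prod_le (fun _ => (exp_pos _).le)
    (summable_pnat_exp_neg_mul_sq ha) N).trans
    (pow_le_pow_left₀ (tsum_nonneg fun _ => (exp_pos _).le) ?_ N)
  refine (tsum_pnat_exp_neg_mul_sq_le ha).trans_eq ?_
  rw [hsqrt]
  ring

theorem log_freeZ_div_le {N : ℕ} (hN : 0 < N) :
    log (freeZ β Λ N) / N ≤ 2 - log (2 * π * √β * (N / Λ)) := by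
  have hN' : (0 : ℝ) < N := Nat.cast_pos.mpr hN
  have hc : 0 < 2 * π * √β / Λ := by positivity
  have hlog_factorial : N * log N - N ≤ log N ! := by
    have := log_le_log (by positivity) (pow_div_factorial_le_exp (N : ℝ) hN'.le N)
    rw [log_div (by positivity) (by positivity), log_pow, log_exp] at this
    linarith
  have hlog_Z : log N ! + log (freeZ β Λ N) ≤ N * (1 - log (2 * π * √β / Λ)) := by
    have hZ := freeZ_pos hβ hΛ N
    have := log_le_log (mul_pos (by positivity) hZ) (factorial_mul_freeZ_le hβ hΛ N)
    rwa [log_mul (by positivity) hZ.ne', log_pow, log_div (exp_pos 1).ne' hc.ne', log_exp] at this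
  have hsplit : log (2 * π * √β * (N / Λ)) = log (2 * π * √β / Λ) + log N := by
    rw [← log_mul hc.ne' hN'.ne']
    ring_nf
  rw [div_le_iff₀ hN', hsplit]
  nlinarith

end FreeZ

theorem stmt_7_general (β : ℝ) (hβ : 0 < β) (Λ : ℕ → ℝ) (N : ℕ → ℕ)
    (hρ : Tendsto (fun n => (N n : ℝ) / Λ n) atTop atTop) :
    Tendsto (fun n => Real.log (freeZ β (Λ n) (N n)) / N n) atTop atBot := by
  have hbound : ∀ᶠ n in atTop,
      log (freeZ β (Λ n) (N n)) / N n ≤ 2 - log (2 * π * √β * (N n / Λ n)) := by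
    filter_upwards [hρ.eventually_gt_atTop 0] with n hn
    obtain ⟨hN, hΛ⟩ : (0 : ℝ) < N n ∧ 0 < Λ n :=
      (div_pos_iff.mp hn).resolve_right fun h => (Nat.cast_nonneg _).not_gt h.1
    exact log_freeZ_div_le hβ hΛ (Nat.cast_pos.mp hN)
  refine tendsto_atBot_mono' _ hbound (tendsto_atBot_add_const_left _ 2 ?_)
  exact tendsto_neg_atTop_atBot.comp (tendsto_log_atTop.comp (hρ.const_mul_atTop (by positivity)))

/-- If `Λ_n → ∞` and `N_n/Λ_n → ∞`, then `(ln Z_n^{(0)})/N_n → −∞`. -/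
theorem stmt_7 (β : ℝ) (hβ : 0 < β) (Λ : ℕ → ℝ) (N : ℕ → ℕ)
    (hΛpos : ∀ n, 0 < Λ n) (hNpos : ∀ n, 0 < N n)
    (hΛ : Tendsto Λ atTop atTop)
    (hρ : Tendsto (fun n => (N n : ℝ) / Λ n) atTop atTop) :
    Tendsto (fun n => Real.log (freeZ β (Λ n) (N n)) / N n) atTop atBot :=
  stmt_7_general β hβ Λ N hρ
end

section
/- Let β > 0, Λ > 0, C > 0, and let ε : {1,2,...} → ℝ satisfy ε_k > 0 and |ε_k − π²k²/Λ²| ≤ C for all k ≥ 1. Then Σ_{k=1}^∞ ln(1 + e^{β(μ−ε_k)}) ∼ (2βΛ/(3π)) μ^{3/2} as μ → ∞; that is, the ratio of the left-hand side to (2βΛ/(3π)) μ^{3/2} tends to 1. -/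
/-!
With `a = π²/Λ²` and `x₊ = max x 0`, the elementary bounds
`x₊ ≤ log (1 + eˣ) ≤ x₊ + log 2` and `log (1 + eˣ) ≤ eˣ` squeeze the sum between
`β ∑ₖ (μ - C - a k²)₊` and `β ∑ₖ (μ + C - a k²)₊ + O(√μ)`: the error is `log 2` for each of the
`O(√μ)` levels `k` with `a k² ≤ μ + C`, plus a geometric tail `∑ₙ e^{-β a n}` above them.
The ramp sum is explicit through `∑ k²`: for `N = ⌊s⌋`,
`∑ₖ (a s² - a k²)₊ = a (N s² - N (N + 1) (2 N + 1) / 6) ~ (2 a / 3) s³`,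
so both bounds are `~ (2 β / (3 √a)) μ^{3/2} = (2 β Λ / (3 π)) μ^{3/2}`.
-/

open Real Filter Topology

namespace Real

theorem max_le_log_one_add_exp (x : ℝ) : max x 0 ≤ log (1 + exp x) := by
  rw [le_log_iff_exp_le (by positivity)]
  rcases le_total x 0 with h | h
  · rw [max_eq_right h, exp_zero]
    linarith [exp_pos x]
  · rw [max_eq_left h]
    linarith

theorem log_one_add_exp_le_max_add_log_two (x : ℝ) : log (1 + exp x) ≤ max x 0 + log 2 := by
  rw [log_le_iff_le_exp (by positivity), exp_add, exp_log two_pos]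
  have := exp_le_exp.2 (le_max_left x 0)
  have := one_le_exp (le_max_right x 0)
  linarith

theorem log_one_add_exp_le_exp (x : ℝ) : log (1 + exp x) ≤ exp x := by
  linarith [log_le_sub_one_of_pos (by positivity : 0 < 1 + exp x)]

theorem rpow_three_halves_eq_sqrt_pow {x : ℝ} (hx : 0 ≤ x) : x ^ ((3 : ℝ) / 2) = √x ^ 3 := by
  rw [sqrt_eq_rpow, ← rpow_natCast, ← rpow_mul hx]
  norm_num

end Real

theorem sum_range_add_one_sq (N : ℕ) :
    ∑ n ∈ Finset.range N, ((n : ℝ) + 1) ^ 2 = (N : ℝ) * (N + 1) * (2 * N + 1) / 6 := by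
  induction N with
  | zero => simp
  | succ N ih =>
    rw [Finset.sum_range_succ, ih]
    push_cast
    ring

noncomputable def rampSum (a x : ℝ) : ℝ := ∑' n : ℕ, max (x - a * ((n : ℝ) + 1) ^ 2) 0

section rampSum

variable {a : ℝ}

lemma ramp_eq_zero_of_floor_le (ha : 0 ≤ a) {s x : ℝ} (hs : 0 ≤ s) (hx : x ≤ a * s ^ 2) {n : ℕ}
    (hn : ⌊s⌋₊ ≤ n) : max (x - a * ((n : ℝ) + 1) ^ 2) 0 = 0 := by
  have hsn : s ≤ n + 1 := by
    have := Nat.lt_floor_add_one s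
    have : (⌊s⌋₊ : ℝ) ≤ n := by exact_mod_cast hn
    linarith
  have : a * s ^ 2 ≤ a * ((n : ℝ) + 1) ^ 2 := by gcongr
  exact max_eq_right (by linarith)

lemma summable_ramp (ha : 0 < a) (x : ℝ) :
    Summable fun n : ℕ => max (x - a * ((n : ℝ) + 1) ^ 2) 0 := by
  refine summable_of_ne_finset_zero (s := Finset.range ⌊√(x / a)⌋₊) fun n hn => ?_
  refine ramp_eq_zero_of_floor_le ha.le (sqrt_nonneg _) ?_ (by simpa using hn)
  calc x = a * (x / a) := (mul_div_cancel₀ x ha.ne').symm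
    _ ≤ a * √(x / a) ^ 2 := by rw [sq_sqrt']; gcongr; exact le_max_left _ _

lemma rampSum_mul_sq (ha : 0 ≤ a) {s : ℝ} (hs : 0 ≤ s) :
    rampSum a (a * s ^ 2) =
      a * (⌊s⌋₊ * s ^ 2 - ⌊s⌋₊ * (⌊s⌋₊ + 1) * (2 * ⌊s⌋₊ + 1) / 6) := by
  have hpos : ∀ n ∈ Finset.range ⌊s⌋₊,
      max (a * s ^ 2 - a * ((n : ℝ) + 1) ^ 2) 0 = a * s ^ 2 - a * ((n : ℝ) + 1) ^ 2 := by
    intro n hn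
    have : (n : ℝ) + 1 ≤ s := by
      have := Nat.floor_le hs
      have : ((n + 1 : ℕ) : ℝ) ≤ ⌊s⌋₊ := by exact_mod_cast Finset.mem_range.1 hn
      push_cast at this
      linarith
    have : a * ((n : ℝ) + 1) ^ 2 ≤ a * s ^ 2 := by gcongr
    exact max_eq_left (by linarith)
  rw [rampSum, tsum_eq_sum (s := Finset.range ⌊s⌋₊) fun n hn => ramp_eq_zero_of_floor_le ha hs
    le_rfl (by simpa using hn), Finset.sum_congr rfl hpos, Finset.sum_sub_distrib,
    ← Finset.mul_sum _ fun n : ℕ => ((n : ℝ) + 1) ^ 2, sum_range_add_one_sq, Finset.sum_const,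
    Finset.card_range, nsmul_eq_mul]
  ring

end rampSum

section asymptotics

variable {a : ℝ}

lemma tendsto_rampSum_mul_sq_div_pow (ha : 0 ≤ a) :
    Tendsto (fun s => rampSum a (a * s ^ 2) / s ^ 3) atTop (𝓝 (2 * a / 3)) := by
  have hv : Tendsto (fun s : ℝ => (⌊s⌋₊ : ℝ) / s) atTop (𝓝 1) := tendsto_nat_floor_div_atTop
  have hw : Tendsto (fun s : ℝ => s⁻¹) atTop (𝓝 0) := tendsto_inv_atTop_zero
  have hlim :=
    (hv.sub (((hv.mul (hv.add hw)).mul ((hv.const_mul 2).add hw)).div_const 6)).const_mul a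
  rw [show a * (1 - 1 * (1 + 0) * (2 * 1 + 0) / 6) = 2 * a / 3 by ring] at hlim
  refine hlim.congr' ?_
  filter_upwards [eventually_gt_atTop 0] with s hs
  rw [rampSum_mul_sq ha hs.le]
  field_simp

lemma tendsto_sqrt_add_div_div_sqrt (ha : 0 < a) (d : ℝ) :
    Tendsto (fun μ => √((μ + d) / a) / √μ) atTop (𝓝 (√a)⁻¹) := by
  have hlim : Tendsto (fun μ : ℝ => √((1 + d * μ⁻¹) / a)) atTop (𝓝 √((1 + d * 0) / a)) :=
    ((tendsto_const_nhds.add (tendsto_inv_atTop_zero.const_mul d)).div_const a).sqrt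
  rw [mul_zero, add_zero, one_div, sqrt_inv] at hlim
  refine hlim.congr' ?_
  filter_upwards [eventually_gt_atTop 0] with μ hμ
  rw [← sqrt_div' _ hμ.le]
  congr 1
  field_simp

lemma tendsto_rampSum_add_div_sqrt_pow (ha : 0 < a) (d : ℝ) :
    Tendsto (fun μ => rampSum a (μ + d) / √μ ^ 3) atTop (𝓝 (2 / (3 * √a))) := by
  have hs : Tendsto (fun μ => √((μ + d) / a)) atTop atTop :=
    tendsto_sqrt_atTop.comp ((tendsto_atTop_add_const_right _ d tendsto_id).atTop_div_const ha)
  have hlim := ((tendsto_rampSum_mul_sq_div_pow ha.le).comp hs).mul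
    ((tendsto_sqrt_add_div_div_sqrt ha d).pow 3)
  have hsa : 0 < √a := sqrt_pos.2 ha
  rw [show 2 * a / 3 * ((√a)⁻¹) ^ 3 = 2 / (3 * √a) by
    field_simp
    rw [sq_sqrt ha.le]] at hlim
  refine hlim.congr' ?_
  filter_upwards [eventually_gt_atTop 0, eventually_gt_atTop (-d)] with μ hμ hμd
  have hpos : 0 < √((μ + d) / a) := sqrt_pos.2 (div_pos (by linarith) ha)
  simp only [Function.comp_apply]
  rw [sq_sqrt (div_pos (by linarith) ha).le, mul_div_cancel₀ _ ha.ne']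
  field_simp

lemma tendsto_mul_sqrt_add_const_div_sqrt_pow (ha : 0 < a) (d c₁ c₂ : ℝ) :
    Tendsto (fun μ => (c₁ * √((μ + d) / a) + c₂) / √μ ^ 3) atTop (𝓝 0) := by
  have hlim := ((tendsto_sqrt_add_div_div_sqrt ha d).mul
    (tendsto_inv_atTop_zero.const_mul c₁)).add
    ((tendsto_const_nhds (x := c₂)).div_atTop
      ((tendsto_pow_atTop three_ne_zero).comp tendsto_sqrt_atTop))
  rw [mul_zero, mul_zero, zero_add] at hlim
  refine hlim.congr' ?_
  filter_upwards [eventually_gt_atTop 0] with μ hμ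
  have := sqrt_pos.2 hμ
  simp only [Function.comp_apply]
  rw [show μ⁻¹ = (√μ ^ 2)⁻¹ by rw [sq_sqrt hμ.le]]
  field_simp

end asymptotics

noncomputable def logGrandPartition (β : ℝ) (ε : ℕ → ℝ) (μ : ℝ) : ℝ :=
  ∑' n : ℕ, log (1 + exp (β * (μ - ε n)))

section bounds

variable {a β C : ℝ} {ε : ℕ → ℝ}

lemma log_one_add_exp_le_ramp_add (ha : 0 ≤ a) (hβ : 0 ≤ β) {μ e : ℝ} {n K : ℕ}
    (he : a * ((n : ℝ) + 1) ^ 2 - C ≤ e) (hK : μ + C ≤ a * (K : ℝ) ^ 2) :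
    log (1 + exp (β * (μ - e))) ≤ β * max (μ + C - a * ((n : ℝ) + 1) ^ 2) 0 +
      ((if n < K then log 2 else 0) + exp (-(β * a)) ^ n) := by
  set z := μ + C - a * ((n : ℝ) + 1) ^ 2
  have hmono : log (1 + exp (β * (μ - e))) ≤ log (1 + exp (β * z)) := by
    gcongr
    linarith
  have hramp : 0 ≤ β * max z 0 := by positivity
  split_ifs with hn
  · rw [mul_max_of_nonneg _ _ hβ, mul_zero]
    linarith [log_one_add_exp_le_max_add_log_two (β * z), pow_nonneg (exp_pos (-(β * a))).le n]
  · have hz : z ≤ -(a * n) := by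
      have hKn : (K : ℝ) ^ 2 ≤ (n : ℝ) ^ 2 := by gcongr; exact_mod_cast not_lt.1 hn
      have : a * (K : ℝ) ^ 2 ≤ a * (n : ℝ) ^ 2 := by gcongr
      have : 0 ≤ a * n := by positivity
      simp only [z]
      linarith
    have : exp (β * z) ≤ exp (-(β * a)) ^ n := by
      rw [← exp_nat_mul]
      exact exp_le_exp.2 (by linarith [mul_le_mul_of_nonneg_left hz hβ])
    linarith [log_one_add_exp_le_exp (β * z)]

lemma exists_nat_le_mul_sq_le_sqrt_add_one (ha : 0 < a) (x : ℝ) :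
    ∃ K : ℕ, x ≤ a * (K : ℝ) ^ 2 ∧ (K : ℝ) ≤ √(x / a) + 1 := by
  refine ⟨⌈√(x / a)⌉₊, ?_, (Nat.ceil_lt_add_one (sqrt_nonneg _)).le⟩
  calc x = a * (x / a) := (mul_div_cancel₀ x ha.ne').symm
    _ ≤ a * √(x / a) ^ 2 := by rw [sq_sqrt']; gcongr; exact le_max_left _ _
    _ ≤ a * (⌈√(x / a)⌉₊ : ℝ) ^ 2 := by gcongr; exact Nat.le_ceil _

lemma summable_and_logGrandPartition_le (ha : 0 < a) (hβ : 0 < β)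
    (hε : ∀ n : ℕ, |ε n - a * ((n : ℝ) + 1) ^ 2| ≤ C) (μ : ℝ) :
    Summable (fun n => log (1 + exp (β * (μ - ε n)))) ∧
      logGrandPartition β ε μ ≤ β * rampSum a (μ + C) +
        ((√((μ + C) / a) + 1) * log 2 + (1 - exp (-(β * a)))⁻¹) := by
  obtain ⟨K, hK, hKle⟩ := exists_nat_le_mul_sq_le_sqrt_add_one ha (μ + C)
  have hr : exp (-(β * a)) < 1 := exp_lt_one_iff.2 (by simp only [neg_lt_zero]; positivity)
  have hgeom := summable_geometric_of_lt_one (exp_pos (-(β * a))).le hr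
  have hcount : Summable fun n : ℕ => if n < K then log 2 else 0 :=
    summable_of_ne_finset_zero (s := Finset.range K) (by simp_all)
  have hbound : ∀ n, log (1 + exp (β * (μ - ε n))) ≤ β * max (μ + C - a * ((n : ℝ) + 1) ^ 2) 0 +
      ((if n < K then log 2 else 0) + exp (-(β * a)) ^ n) := fun n =>
    log_one_add_exp_le_ramp_add ha.le hβ.le (by linarith [(abs_le.1 (hε n)).1]) hK
  have hmajor := ((summable_ramp ha (μ + C)).mul_left β).add (hcount.add hgeom)
  have hsum : Summable (fun n => log (1 + exp (β * (μ - ε n)))) :=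
    hmajor.of_nonneg_of_le (fun n => log_nonneg (by linarith [exp_pos (β * (μ - ε n))])) hbound
  have hcount_sum : ∑' n : ℕ, (if n < K then log 2 else 0) = K * log 2 := by
    rw [tsum_eq_sum (s := Finset.range K) (by simp_all), Finset.sum_ite_of_true (by simp)]
    simp
  refine ⟨hsum, (hsum.tsum_le_tsum hbound hmajor).trans ?_⟩
  rw [rampSum, Summable.tsum_add ((summable_ramp ha _).mul_left β) (hcount.add hgeom),
    hcount.tsum_add hgeom, tsum_mul_left, hcount_sum, tsum_geometric_of_lt_one (exp_pos _).le hr]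
  gcongr

lemma mul_rampSum_sub_le_logGrandPartition (ha : 0 < a) (hβ : 0 ≤ β)
    (hε : ∀ n : ℕ, |ε n - a * ((n : ℝ) + 1) ^ 2| ≤ C) {μ : ℝ}
    (hsum : Summable (fun n => log (1 + exp (β * (μ - ε n))))) :
    β * rampSum a (μ - C) ≤ logGrandPartition β ε μ := by
  rw [rampSum, ← tsum_mul_left]
  refine ((summable_ramp ha _).mul_left β).tsum_le_tsum (fun n => ?_) hsum
  refine le_trans ?_ (max_le_log_one_add_exp _)
  rw [mul_max_of_nonneg _ _ hβ, mul_zero]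
  refine max_le_max (mul_le_mul_of_nonneg_left ?_ hβ) le_rfl
  linarith [(abs_le.1 (hε n)).2]

end bounds

theorem tendsto_logGrandPartition_div_sqrt_pow {a β C : ℝ} {ε : ℕ → ℝ} (ha : 0 < a) (hβ : 0 < β)
    (hε : ∀ n : ℕ, |ε n - a * ((n : ℝ) + 1) ^ 2| ≤ C) :
    Tendsto (fun μ => logGrandPartition β ε μ / √μ ^ 3) atTop (𝓝 (β * (2 / (3 * √a)))) := by
  have hlower := (tendsto_rampSum_add_div_sqrt_pow ha (-C)).const_mul β
  have hupper := ((tendsto_rampSum_add_div_sqrt_pow ha C).const_mul β).add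
    (tendsto_mul_sqrt_add_const_div_sqrt_pow ha C (log 2) (log 2 + (1 - exp (-(β * a)))⁻¹))
  rw [add_zero] at hupper
  refine tendsto_of_tendsto_of_tendsto_of_le_of_le' hlower hupper
    (Eventually.of_forall fun μ => ?_) (Eventually.of_forall fun μ => ?_)
  · rw [← mul_div_assoc, ← sub_eq_add_neg]
    gcongr
    exact mul_rampSum_sub_le_logGrandPartition ha hβ.le hε
      (summable_and_logGrandPartition_le ha hβ hε μ).1
  · rw [← mul_div_assoc, ← add_div]
    gcongr
    linarith [(summable_and_logGrandPartition_le ha hβ hε μ).2]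

theorem stmt_10_general (β Λ C : ℝ) (hβ : 0 < β) (hΛ : 0 < Λ)
    (ε : ℕ+ → ℝ)
    (hε : ∀ k : ℕ+, |ε k - π ^ 2 * (k : ℕ) ^ 2 / Λ ^ 2| ≤ C) :
    Tendsto (fun μ : ℝ =>
        (∑' k : ℕ+, Real.log (1 + Real.exp (β * (μ - ε k)))) /
          (2 * β * Λ / (3 * π) * μ ^ ((3 : ℝ) / 2)))
      atTop (nhds 1) := by
  have hε' : ∀ n : ℕ, |ε n.succPNat - (π / Λ) ^ 2 * ((n : ℝ) + 1) ^ 2| ≤ C := fun n => by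
    convert hε n.succPNat using 3
    rw [Nat.succPNat_coe]
    push_cast
    ring
  have hlim := (tendsto_logGrandPartition_div_sqrt_pow (by positivity) hβ hε').div_const
    (2 * β * Λ / (3 * π))
  rw [sqrt_sq (by positivity), show β * (2 / (3 * (π / Λ))) / (2 * β * Λ / (3 * π)) = 1 by
    field_simp] at hlim
  refine hlim.congr' ?_
  filter_upwards [eventually_ge_atTop 0] with μ hμ
  rw [rpow_three_halves_eq_sqrt_pow hμ, logGrandPartition,
    ← Equiv.pnatEquivNat.symm.tsum_eq (fun k => log (1 + exp (β * (μ - ε k)))),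
    Equiv.pnatEquivNat_symm_apply, div_div, mul_comm]

/-- Lemma: `ln Ξ_μ^{(V)}(Λ) = Σ_{k=1}^∞ ln(1 + e^{β(μ−ε_k)}) ∼ (2βΛ/(3π)) μ^{3/2}`
as `μ → ∞`. -/
theorem stmt_10 (β Λ C : ℝ) (hβ : 0 < β) (hΛ : 0 < Λ) (hC : 0 < C)
    (ε : ℕ+ → ℝ) (hpos : ∀ k : ℕ+, 0 < ε k)
    (hε : ∀ k : ℕ+, |ε k - π ^ 2 * (k : ℕ) ^ 2 / Λ ^ 2| ≤ C) :
    Tendsto (fun μ : ℝ =>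
        (∑' k : ℕ+, Real.log (1 + Real.exp (β * (μ - ε k)))) /
          (2 * β * Λ / (3 * π) * μ ^ ((3 : ℝ) / 2)))
      atTop (nhds 1) :=
  stmt_10_general β Λ C hβ hΛ ε hε
end
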